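/- Let a, b, c, d, k, l be integers with a*d − b*c = 1 and |a + d| > 2, and let G be the group with presentation ⟨x, y, z, t | t x t⁻¹ = x^a y^c z^k, t y t⁻¹ = x^b y^d z^l, t z t⁻¹ = z, [x,y] = z, x z = z x, y z = z y⟩, where [x,y] = x y x⁻¹ y⁻¹. Then there exists a finite abelian group F of cardinality |2 − a − d| such that the abelianization of G is isomorphic to ℤ × F, with the infinite cyclic factor generated by the class of t. In particular, the group of group homomorphisms G → ℤ is infinite cyclic. -/

import Mathlib

namespace Stmt13

/-- The free group generators `x, y, z, t` for the `Sol⁴₁` group. -/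
private abbrev gx : FreeGroup (Fin 4) := FreeGroup.of 0
private abbrev gy : FreeGroup (Fin 4) := FreeGroup.of 1
private abbrev gz : FreeGroup (Fin 4) := FreeGroup.of 2
private abbrev gt : FreeGroup (Fin 4) := FreeGroup.of 3

/-- The relators of the presentation `⟨x, y, z, t | t x t⁻¹ = xᵃ yᶜ zᵏ, t y t⁻¹ = xᵇ yᵈ zˡ,
t z t⁻¹ = z, [x,y] = z, x z = z x, y z = z y⟩`, where `[x,y] = x y x⁻¹ y⁻¹`. -/
def solRels (a b c d k l : ℤ) : Set (FreeGroup (Fin 4)) :=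
  { gt * gx * gt⁻¹ * (gx ^ a * gy ^ c * gz ^ k)⁻¹,
    gt * gy * gt⁻¹ * (gx ^ b * gy ^ d * gz ^ l)⁻¹,
    gt * gz * gt⁻¹ * gz⁻¹,
    gx * gy * gx⁻¹ * gy⁻¹ * gz⁻¹,
    gx * gz * gx⁻¹ * gz⁻¹,
    gy * gz * gy⁻¹ * gz⁻¹ }

/-- `SolG a b c d k l`, the fundamental group (model) of a closed oriented `Sol⁴₁`-manifold. -/
abbrev SolG (a b c d k l : ℤ) : Type := PresentedGroup (solRels a b c d k l)

/-- The image of the generator `t` in `SolG a b c d k l`. -/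
def tS (a b c d k l : ℤ) : SolG a b c d k l := PresentedGroup.of 3

end Stmt13

/-!
In the abelianization `z = [x, y]` dies, and the classes of `x` and `y` satisfy only `v = A v`
for `A = !![a, b; c, d]`, the conjugation action of `t`. So the abelianization is `ℤ`, generated
by `t`, times the coinvariants `ℤ² ⧸ (1 - A) ℤ²`, whose order is
`|det (1 - A)| = |1 - tr A + det A| = |2 - a - d|`, nonzero because `tr A ≠ 2`.
A homomorphism to `ℤ` kills the finite factor, hence is determined by the image of `t`.
-/

open scoped Matrix

theorem Submodule.natCard_quotient_range_eq_natAbs_det {M : Type*} [AddCommGroup M]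
    [Module.Free ℤ M] [Module.Finite ℤ M] {f : M →ₗ[ℤ] M} (hf : Function.Injective f) :
    Nat.card (M ⧸ LinearMap.range f) = (LinearMap.det f).natAbs :=
  (natAbs_det_equiv (LinearMap.range f) (LinearEquiv.ofInjective f hf)).symm

theorem Matrix.det_one_sub_fin_two {R : Type*} [CommRing R] (A : Matrix (Fin 2) (Fin 2) R) :
    (1 - A).det = 1 - A.trace + A.det := by
  simp only [det_fin_two, trace_fin_two, sub_apply, one_apply_eq, ne_eq, zero_ne_one,
    not_false_eq_true, one_apply_ne, one_ne_zero]
  ring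

theorem MonoidHom.eq_one_of_finite {F A : Type*} [Group F] [Finite F] [Group A]
    [IsMulTorsionFree A] (φ : F →* A) : φ = 1 :=
  ext fun u ↦ (φ.isOfFinOrder (isOfFinOrder_of_finite u)).eq_one'

theorem MonoidHom.eval_bijective_of_abelianization_mulEquiv {G F : Type*} [Group G]
    [CommGroup F] [Finite F] (e : Abelianization G ≃* Multiplicative ℤ × F) {g : G}
    (hg : e (Abelianization.of g) = (Multiplicative.ofAdd 1, 1)) :
    Function.Bijective (eval g : (G →* Multiplicative ℤ) →* Multiplicative ℤ) := by
  refine ⟨(injective_iff_map_eq_one _).2 fun f hf ↦ ?_, fun m ↦ ?_⟩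
  · set φ := (Abelianization.lift f).comp e.symm.toMonoidHom
    have hφ : φ = 1 := by
      have hinl : φ.comp (inl _ _) = 1 := ext_mint <| by simpa [φ, ← hg] using hf
      rw [← φ.coprod_unique, hinl, (φ.comp (inr _ _)).eq_one_of_finite]
      rfl
    ext x
    simpa [φ] using DFunLike.congr_fun hφ (e (Abelianization.of x))
  · let π : G →* Multiplicative ℤ := (fst _ _).comp (e.toMonoidHom.comp Abelianization.of)
    exact ⟨π ^ Multiplicative.toAdd m, by simp [π, hg, ← ofAdd_zsmul]⟩

namespace Stmt13

abbrev Coinvariants {n : Type*} [Fintype n] [DecidableEq n] (A : Matrix n n ℤ) : Type _ :=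
  (n → ℤ) ⧸ LinearMap.range (Matrix.toLin' (1 - A))

namespace Coinvariants

variable {n : Type*} [Fintype n] [DecidableEq n] {A : Matrix n n ℤ}

theorem mk_mulVec (v : n → ℤ) :
    (Submodule.Quotient.mk (A *ᵥ v) : Coinvariants A) = Submodule.Quotient.mk v :=
  (Submodule.Quotient.eq' _).2 ⟨v, by simp [sub_eq_neg_add]⟩

def lift {M : Type*} [AddCommGroup M] (L : (n → ℤ) →ₗ[ℤ] M) (hL : ∀ v, L (A *ᵥ v) = L v) :
    Coinvariants A →ₗ[ℤ] M :=
  Submodule.liftQ _ L <| by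
    rintro _ ⟨v, rfl⟩
    simp [hL]

variable (A) in
def gen (i : n) : Coinvariants A := Submodule.Quotient.mk (Pi.single i 1)

theorem mk_eq_sum_smul_gen (v : n → ℤ) :
    (Submodule.Quotient.mk v : Coinvariants A) = ∑ i, v i • gen A i := by
  conv_lhs => rw [← Finset.univ_sum_single v]
  simp only [gen, ← Submodule.mkQ_apply, map_sum, ← map_zsmul, ← Pi.single_smul', smul_eq_mul,
    mul_one]

theorem sum_smul_gen (j : n) : ∑ i, A i j • gen A i = gen A j := by
  rw [← mk_eq_sum_smul_gen, gen, ← mk_mulVec (A := A) (Pi.single j 1), Matrix.mulVec_single_one]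
  rfl

theorem natCard (hA : (1 - A).det ≠ 0) : Nat.card (Coinvariants A) = (1 - A).det.natAbs := by
  rw [Submodule.natCard_quotient_range_eq_natAbs_det, LinearMap.det_toLin']
  exact Matrix.mulVec_injective_of_det_ne_zero hA

theorem finite (hA : (1 - A).det ≠ 0) : Finite (Coinvariants A) :=
  Nat.finite_of_card_ne_zero <| by simpa [natCard hA] using hA

end Coinvariants

section Relations

variable {a b c d k l : ℤ}

def liftOfComm {C : Type*} [CommGroup C] (X Y T : C) (hx : X ^ a * Y ^ c = X)
    (hy : X ^ b * Y ^ d = Y) : SolG a b c d k l →* C :=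
  PresentedGroup.toGroup (f := ![X, Y, 1, T]) <| by
    rintro r (rfl | rfl | rfl | rfl | rfl | rfl) <;>
      simp [mul_comm, ← mul_inv, hx, hy]

theorem map_relations_of_comm {C : Type*} [CommGroup C] (f : SolG a b c d k l →* C) :
    f (.of 2) = 1 ∧ f (.of 0) ^ a * f (.of 1) ^ c = f (.of 0) ∧
      f (.of 0) ^ b * f (.of 1) ^ d = f (.of 1) := by
  have h {r} (hr : r ∈ solRels a b c d k l) : f.comp (PresentedGroup.mk _) r = 1 := by
    rw [MonoidHom.comp_apply, PresentedGroup.one_of_mem hr, map_one]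
  have hx := h (Set.mem_insert _ _)
  have hy := h (Set.mem_insert_of_mem _ (Set.mem_insert _ _))
  have hz := h (by simp [solRels] : gx * gy * gx⁻¹ * gy⁻¹ * gz⁻¹ ∈ solRels a b c d k l)
  simp only [map_mul, map_inv, map_zpow, mul_inv_cancel_comm, mul_inv_cancel,
    mul_inv_eq_one] at hx hy hz
  replace hz : f (.of 2) = 1 := hz.symm
  change _ = f (.of 0) ^ a * f (.of 1) ^ c * f (.of 2) ^ k at hx
  change _ = f (.of 0) ^ b * f (.of 1) ^ d * f (.of 2) ^ l at hy
  rw [hz, one_zpow, mul_one] at hx hy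
  exact ⟨hz, hx.symm, hy.symm⟩

end Relations

section Abelianization

variable (a b c d k l : ℤ)

abbrev monodromy : Matrix (Fin 2) (Fin 2) ℤ := !![a, b; c, d]

noncomputable def abelianizationToProd :
    Abelianization (SolG a b c d k l) →*
      Multiplicative ℤ × Multiplicative (Coinvariants (monodromy a b c d)) :=
  Abelianization.lift <| liftOfComm
    (1, .ofAdd (Coinvariants.gen _ 0)) (1, .ofAdd (Coinvariants.gen _ 1)) (.ofAdd 1, 1)
    (Prod.ext (by simp) <| by
      simpa [← ofAdd_zsmul, ← ofAdd_add] using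
        Coinvariants.sum_smul_gen (A := monodromy a b c d) 0)
    (Prod.ext (by simp) <| by
      simpa [← ofAdd_zsmul, ← ofAdd_add] using
        Coinvariants.sum_smul_gen (A := monodromy a b c d) 1)

def fiberGens : Fin 2 → Additive (Abelianization (SolG a b c d k l)) :=
  ![.ofMul (.of (.of 0)), .ofMul (.of (.of 1))]

theorem linearCombination_fiberGens_mulVec (v : Fin 2 → ℤ) :
    Fintype.linearCombination ℤ (fiberGens a b c d k l) (monodromy a b c d *ᵥ v) =
      Fintype.linearCombination ℤ (fiberGens a b c d k l) v := by
  obtain ⟨-, hx, hy⟩ := map_relations_of_comm (Abelianization.of (G := SolG a b c d k l))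
  replace hx := congrArg Additive.ofMul hx
  replace hy := congrArg Additive.ofMul hy
  simp only [ofMul_mul, ofMul_zpow] at hx hy
  simp [fiberGens, Fintype.linearCombination_apply, dotProduct, Fin.sum_univ_two]
  linear_combination (norm := module) v 0 • hx + v 1 • hy

noncomputable def prodToAbelianization :
    Multiplicative ℤ × Multiplicative (Coinvariants (monodromy a b c d)) →*
      Abelianization (SolG a b c d k l) :=
  (zpowersHom _ (.of (.of 3))).coprod <| AddMonoidHom.toMultiplicativeLeft <|
    (Coinvariants.lift _ (linearCombination_fiberGens_mulVec a b c d k l)).toAddMonoidHom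

theorem prodToAbelianization_comp_abelianizationToProd :
    (prodToAbelianization a b c d k l).comp (abelianizationToProd a b c d k l) = .id _ := by
  refine Abelianization.hom_ext _ _ <| PresentedGroup.ext fun i ↦ ?_
  fin_cases i <;> simp [abelianizationToProd, prodToAbelianization, liftOfComm,
    PresentedGroup.toGroup.of, Coinvariants.lift, Coinvariants.gen, fiberGens,
    (map_relations_of_comm (Abelianization.of (G := SolG a b c d k l))).1]

theorem abelianizationToProd_prodToAbelianization
    (p : Multiplicative ℤ × Multiplicative (Coinvariants (monodromy a b c d))) :
    abelianizationToProd a b c d k l (prodToAbelianization a b c d k l p) = p := by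
  obtain ⟨m, q⟩ := p
  obtain ⟨v, hv⟩ := Submodule.Quotient.mk_surjective _ q.toAdd
  rw [← ofAdd_toAdd q, ← hv]
  simp [abelianizationToProd, prodToAbelianization, liftOfComm,
    PresentedGroup.toGroup.of, Coinvariants.lift, fiberGens, Fintype.linearCombination_apply,
    ← ofAdd_zsmul, ← ofAdd_add]
  rw [Coinvariants.mk_eq_sum_smul_gen v, Fin.sum_univ_two]

noncomputable def abelianizationEquiv :
    Abelianization (SolG a b c d k l) ≃*
      Multiplicative ℤ × Multiplicative (Coinvariants (monodromy a b c d)) :=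
  (abelianizationToProd a b c d k l).toMulEquiv (prodToAbelianization a b c d k l)
    (prodToAbelianization_comp_abelianizationToProd a b c d k l)
    (MonoidHom.ext (abelianizationToProd_prodToAbelianization a b c d k l))

theorem abelianizationEquiv_of_tS :
    abelianizationEquiv a b c d k l (.of (tS a b c d k l)) = (.ofAdd 1, 1) := by
  simp [abelianizationEquiv, abelianizationToProd, liftOfComm, tS, PresentedGroup.toGroup.of]

end Abelianization

theorem det_one_sub_monodromy {a b c d : ℤ} (h1 : a * d - b * c = 1) :
    (1 - monodromy a b c d).det = 2 - a - d := by
  rw [Matrix.det_one_sub_fin_two, Matrix.trace_fin_two_of, Matrix.det_fin_two_of]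
  linear_combination h1

/-- Let `a, b, c, d, k, l` be integers with `a*d − b*c = 1` and
`|a + d| > 2`, and let `G` be the group presented as above. Then there is a finite abelian
group `F` of cardinality `|2 − a − d|` such that the abelianization of `G` is isomorphic to
`ℤ × F`, with the infinite cyclic factor generated by the class of `t`; in particular the
group of homomorphisms `G → ℤ` is infinite cyclic. -/
theorem stmt13 (a b c d k l : ℤ) (h1 : a * d - b * c = 1) (h2 : 2 < |a + d|) :
    ∃ (F : Type) (_ : CommGroup F), Finite F ∧ Nat.card F = (2 - a - d).natAbs ∧
      (∃ e : Abelianization (SolG a b c d k l) ≃* Multiplicative ℤ × F,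
        e (Abelianization.of (tS a b c d k l)) = (Multiplicative.ofAdd (1 : ℤ), 1)) ∧
      Nonempty ((SolG a b c d k l →* Multiplicative ℤ) ≃* Multiplicative ℤ) := by
  have hdet := det_one_sub_monodromy h1
  have hne : (1 - monodromy a b c d).det ≠ 0 := by
    rw [hdet]
    rcases lt_abs.1 h2 with h | h <;> omega
  have := Coinvariants.finite hne
  have hcard := Coinvariants.natCard hne
  rw [hdet] at hcard
  have he := abelianizationEquiv_of_tS a b c d k l
  exact ⟨_, inferInstance, inferInstance, (Nat.card_congr Multiplicative.toAdd).trans hcard,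
    ⟨_, he⟩, ⟨.ofBijective _ (MonoidHom.eval_bijective_of_abelianization_mulEquiv _ he)⟩⟩

end Stmt13
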